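/- For h = (h⁽¹⁾,h⁽²⁾) ∈ 𝔽₂², define the family ρ_{h₁,h₂,h₃} : 𝔽₂² → 𝕋 (constant in the base point x) by ρ_{h₁,h₂,h₃}(x) := (h₁⁽²⁾h₂⁽¹⁾h₃⁽¹⁾ + h₁⁽¹⁾h₂⁽²⁾h₃⁽¹⁾ + h₁⁽¹⁾h₂⁽¹⁾h₃⁽²⁾)/2 mod 1, the products in 𝔽₂ being viewed as integers 0 or 1. Then ρ is a 2-cocycle on 𝔽₂² with values in 𝕋; it is not 2-homogeneous, e.g. ρ_{e₁,e₁,e₂} ≠ ρ_{e₂,e₂,e₁} where e₁ = (1,0) and e₂ = (0,1); and consequently ρ is not a 2-coboundary. -/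
import Mathlib


open scoped BigOperators Classical

abbrev Gn (n : ℕ) : Type := Fin n → ZMod 2
abbrev 𝕋 : Type := AddCircle (1 : ℝ)

/-- Discrete derivative `∂_h F = T^h F - F`. -/
def del {G H : Type*} [AddCommGroup G] [AddCommGroup H] (h : G) (F : G → H) : G → H :=
  fun x => F (x + h) - F x

/-- Iterated discrete derivative `∂_{h 0} ⋯ ∂_{h (m-1)} F`. -/
def delIter {G H : Type*} [AddCommGroup G] [AddCommGroup H] {m : ℕ}
    (h : Fin m → G) (F : G → H) : G → H :=
  (List.ofFn h).foldr del F

/-- `F` is a (non-classical) polynomial of degree at most `k` (`k : ℕ`). -/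
def IsPolyN {G H : Type*} [AddCommGroup G] [AddCommGroup H] (k : ℕ) (F : G → H) : Prop :=
  ∀ h : Fin (k + 1) → G, delIter h F = 0

/-- The element `b/2 mod 1` of `𝕋`, for `b ∈ 𝔽₂` viewed as an integer `0` or `1`. -/
noncomputable def halfT (b : ZMod 2) : 𝕋 := (((b.val : ℝ) / 2 : ℝ) : 𝕋)

/-- The explicit symmetric trilinear form
`ρ_{h₁,h₂,h₃}(x) = (h₁⁽²⁾h₂⁽¹⁾h₃⁽¹⁾ + h₁⁽¹⁾h₂⁽²⁾h₃⁽¹⁾ + h₁⁽¹⁾h₂⁽¹⁾h₃⁽²⁾)/2 mod 1`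
on `𝔽₂²` (constant in the base point `x`). -/
noncomputable def rho2 (h : Fin 3 → Gn 2) : Gn 2 → 𝕋 :=
  fun _ => halfT (h 0 1 * h 1 0 * h 2 0) + halfT (h 0 0 * h 1 1 * h 2 0) +
    halfT (h 0 0 * h 1 0 * h 2 1)

/-! ### Auxiliary lemmas -/

lemma halfT0 : halfT 0 = 0 := by
  unfold halfT
  rw [show (0:ZMod 2).val = 0 from rfl]
  norm_num

lemma halfT1 : halfT 1 = ((1/2 : ℝ) : 𝕋) := by
  unfold halfT
  rw [show (1:ZMod 2).val = 1 from rfl]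
  norm_num

lemma halfT_add (a b : ZMod 2) : halfT (a + b) = halfT a + halfT b := by
  have key : halfT 1 + halfT 1 = halfT 0 := by
    rw [halfT1, halfT0, ← AddCircle.coe_add]
    norm_num
  have cases2 := (by decide : ∀ a : ZMod 2, a = 0 ∨ a = 1)
  rcases cases2 a with ha | ha <;> rcases cases2 b with hb | hb <;> subst ha <;> subst hb <;>
    simp only [show ((0:ZMod 2)+0) = 0 from rfl, show ((0:ZMod 2)+1) = 1 from rfl,
      show ((1:ZMod 2)+0) = 1 from rfl, show ((1:ZMod 2)+1) = 0 from rfl, halfT0] <;>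
    first
      | exact (key.trans halfT0).symm
      | abel

lemma half_ne : halfT 1 ≠ halfT 0 := by
  rw [halfT1, halfT0, Ne, AddCircle.coe_eq_zero_iff]
  rintro ⟨n, hn⟩
  rw [zsmul_eq_mul, mul_one] at hn
  have h2 : (2 * (n:ℝ)) = 1 := by linarith
  have : (2 * n : ℤ) = (1 : ℤ) := by exact_mod_cast h2
  omega

noncomputable def EE (a b c : Gn 2) : 𝕋 :=
  halfT (a 1 * b 0 * c 0) + halfT (a 0 * b 1 * c 0) + halfT (a 0 * b 0 * c 1)

lemma rho2_eq (h : Fin 3 → Gn 2) : rho2 h = fun _ => EE (h 0) (h 1) (h 2) := rfl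

lemma EE_sw1 (a b c : Gn 2) : EE a b c = EE b a c := by
  unfold EE
  rw [show a 1 * b 0 * c 0 = b 0 * a 1 * c 0 by ring,
    show a 0 * b 1 * c 0 = b 1 * a 0 * c 0 by ring,
    show a 0 * b 0 * c 1 = b 0 * a 0 * c 1 by ring]
  abel

lemma EE_sw2 (a b c : Gn 2) : EE a b c = EE a c b := by
  unfold EE
  rw [show a 1 * b 0 * c 0 = a 1 * c 0 * b 0 by ring,
    show a 0 * b 1 * c 0 = a 0 * c 0 * b 1 by ring,
    show a 0 * b 0 * c 1 = a 0 * c 1 * b 0 by ring]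
  abel

lemma rho2_part1 (h : Fin 3 → Gn 2) (σ : Equiv.Perm (Fin 3)) : rho2 (h ∘ σ) = rho2 h := by
  rw [rho2_eq, rho2_eq]
  simp only [Function.comp_apply]
  have hs := (by decide : ∀ τ : Equiv.Perm (Fin 3),
    (τ 0, τ 1, τ 2) = (0,1,2) ∨ (τ 0, τ 1, τ 2) = (0,2,1) ∨ (τ 0, τ 1, τ 2) = (1,0,2) ∨
    (τ 0, τ 1, τ 2) = (1,2,0) ∨ (τ 0, τ 1, τ 2) = (2,0,1) ∨ (τ 0, τ 1, τ 2) = (2,1,0)) σ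
  rcases hs with h'|h'|h'|h'|h'|h' <;>
    obtain ⟨e0, e12⟩ := Prod.ext_iff.mp h' <;>
    obtain ⟨e1, e2⟩ := Prod.ext_iff.mp e12 <;>
    simp only at e0 e1 e2 <;>
    rw [e0, e1, e2] <;> funext x
  · rw [EE_sw2]
  · rw [EE_sw1]
  · rw [EE_sw2, EE_sw1]
  · rw [EE_sw1, EE_sw2]
  · rw [EE_sw1, EE_sw2, EE_sw1]

lemma rho2_part2 (h : Fin 3 → Gn 2) (h' : Gn 2) :
    rho2 (Function.update h 0 (h 0 + h')) =
      rho2 h + (fun x => rho2 (Function.update h 0 h') (x + h 0)) := by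
  funext x
  simp only [rho2, Function.update_self, Function.update_of_ne (by decide : (1:Fin 3) ≠ 0),
    Function.update_of_ne (by decide : (2:Fin 3) ≠ 0), Pi.add_apply]
  simp only [add_mul, halfT_add]
  abel

lemma rho2_part3 : (rho2 ![![1, 0], ![1, 0], ![0, 1]] ≠ rho2 ![![0, 1], ![0, 1], ![1, 0]]) := by
  intro e
  have := congrFun e 0
  simp only [rho2] at this
  rw [show ((![![1, 0], ![1, 0], ![0, 1]] : Fin 3 → Gn 2) 0 1 * ![![1, 0], ![1, 0], ![0, 1]] 1 0 * ![![1, 0], ![1, 0], ![0, 1]] 2 0) = 0 from by decide,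
     show ((![![1, 0], ![1, 0], ![0, 1]] : Fin 3 → Gn 2) 0 0 * ![![1, 0], ![1, 0], ![0, 1]] 1 1 * ![![1, 0], ![1, 0], ![0, 1]] 2 0) = 0 from by decide,
     show ((![![1, 0], ![1, 0], ![0, 1]] : Fin 3 → Gn 2) 0 0 * ![![1, 0], ![1, 0], ![0, 1]] 1 0 * ![![1, 0], ![1, 0], ![0, 1]] 2 1) = 1 from by decide,
     show ((![![0, 1], ![0, 1], ![1, 0]] : Fin 3 → Gn 2) 0 1 * ![![0, 1], ![0, 1], ![1, 0]] 1 0 * ![![0, 1], ![0, 1], ![1, 0]] 2 0) = 0 from by decide,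
     show ((![![0, 1], ![0, 1], ![1, 0]] : Fin 3 → Gn 2) 0 0 * ![![0, 1], ![0, 1], ![1, 0]] 1 1 * ![![0, 1], ![0, 1], ![1, 0]] 2 0) = 0 from by decide,
     show ((![![0, 1], ![0, 1], ![1, 0]] : Fin 3 → Gn 2) 0 0 * ![![0, 1], ![0, 1], ![1, 0]] 1 0 * ![![0, 1], ![0, 1], ![1, 0]] 2 1) = 0 from by decide,
     halfT0] at this
  simp only [zero_add, add_zero] at this
  exact half_ne (this.trans halfT0.symm)

lemma del_comm {G H : Type*} [AddCommGroup G] [AddCommGroup H] (a b : G) (F : G → H) :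
    del a (del b F) = del b (del a F) := by
  funext x
  simp only [del]
  rw [add_right_comm]
  abel

lemma del_del {G H : Type*} [AddCommGroup G] [AddCommGroup H] (h : G) (hh : h + h = 0)
    (F : G → H) : del h (del h F) = fun x => -(2 • del h F x) := by
  funext x
  simp only [del]
  rw [add_assoc, hh, add_zero]
  abel

lemma delIter3 {G H : Type*} [AddCommGroup G] [AddCommGroup H] (a b c : G) (F : G → H) :
    delIter ![a, b, c] F = del a (del b (del c F)) := by
  simp [delIter, List.ofFn_succ]

lemma rho2_part4 : ¬ (∃ F : Gn 2 → 𝕋, ∀ h : Fin 3 → Gn 2, rho2 h = delIter h F) := by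
  rintro ⟨F, hF⟩
  apply rho2_part3
  rw [hF ![![1, 0], ![1, 0], ![0, 1]], hF ![![0, 1], ![0, 1], ![1, 0]], delIter3, delIter3]
  have h1 : (![1, 0] : Gn 2) + ![1, 0] = 0 := by decide
  have h2 : (![0, 1] : Gn 2) + ![0, 1] = 0 := by decide
  rw [del_del _ h1, del_del _ h2, del_comm]

/-- `rho2` is a `2`-cocycle on `𝔽₂²` with values in `𝕋`; it is not
`2`-homogeneous (witnessed by `ρ_{e₁,e₁,e₂} ≠ ρ_{e₂,e₂,e₁}`); and it is not a
`2`-coboundary. -/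
theorem rho2_is_cocycle_not_homogeneous_not_coboundary :
    (∀ (h : Fin 3 → Gn 2) (σ : Equiv.Perm (Fin 3)), rho2 (h ∘ σ) = rho2 h) ∧
    (∀ (h : Fin 3 → Gn 2) (h' : Gn 2),
      rho2 (Function.update h 0 (h 0 + h')) =
        rho2 h + (fun x => rho2 (Function.update h 0 h') (x + h 0))) ∧
    (rho2 ![![1, 0], ![1, 0], ![0, 1]] ≠ rho2 ![![0, 1], ![0, 1], ![1, 0]]) ∧
    ¬ (∃ F : Gn 2 → 𝕋, ∀ h : Fin 3 → Gn 2, rho2 h = delIter h F) := by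
  exact ⟨rho2_part1, rho2_part2, rho2_part3, rho2_part4⟩
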